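/- arXiv:2106.10541 — 3 statements merged into one kernel-verified Lean document; each statement's English description precedes it below -/
import Mathlib

section
/- A word f over an alphabet A is Hamming-isometric if and only if it is not the case that f has a 2-error border, where being Hamming-isometric means: for every n and all f-free words u, v of length n, u can be transformed into v by changing, one at a time, the letters at positions where u and v differ, so that every intermediate word is also f-free. (Formally: a word f is not Hamming-isometric iff f has a 2-error border.) -/
open Finset

/-- The factor `f` occurs in `u` at position `j`. -/
def occursAt {A : Type*} {l n : ℕ} (f : Fin l → A) (u : Fin n → A) (j : ℕ) : Prop :=
  ∃ h : j + l ≤ n, ∀ i : Fin l, u ⟨j + i.1, by have := i.isLt; omega⟩ = f i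

/-- `u` is `f`-free: `f` is not a contiguous factor of `u`. -/
def Free {A : Type*} {l n : ℕ} (f : Fin l → A) (u : Fin n → A) : Prop :=
  ∀ j : ℕ, ¬ occursAt f u j

/-- There is an `f`-free transformation from `u` to `v`: a sequence of words starting at `u`,
ending at `v`, each obtained from the previous by changing one position where it differs
from `v` to the letter of `v`, all words being `f`-free. -/
def FreeTransform {A : Type*} [DecidableEq A] {l n : ℕ} (f : Fin l → A)
    (u v : Fin n → A) : Prop :=
  ∃ w : Fin (hammingDist u v + 1) → Fin n → A,
    w 0 = u ∧ w (Fin.last _) = v ∧ (∀ j, Free f (w j)) ∧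
    ∀ j : Fin (hammingDist u v),
      ∃ p : Fin n, w j.castSucc p ≠ v p ∧ w j.succ = Function.update (w j.castSucc) p (v p)

/-- `f` is Hamming-isometric. -/
def HammingIsometric {A : Type*} [DecidableEq A] {l : ℕ} (f : Fin l → A) : Prop :=
  ∀ (n : ℕ) (u v : Fin n → A), Free f u → Free f v → FreeTransform f u v

/-- `u` has a `k`-error border: a proper prefix and suffix of the same positive length `m`
at Hamming distance exactly `k`. -/
def hasKErrorBorder {A : Type*} [DecidableEq A] {n : ℕ} (u : Fin n → A) (k : ℕ) : Prop :=
  ∃ m : ℕ, 0 < m ∧ ∃ h : m < n,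
    hammingDist (fun i : Fin m => u ⟨i.1, by have := i.isLt; omega⟩)
      (fun i : Fin m => u ⟨n - m + i.1, by have := i.isLt; omega⟩) = k

/-- Lee distance between letters of `ZMod d`. -/
def leeDistL {d : ℕ} [NeZero d] (a b : ZMod d) : ℕ :=
  min (max (a.val - b.val) (b.val - a.val)) (d - max (a.val - b.val) (b.val - a.val))

/-- Lee distance between words of length `n` over `ZMod d`. -/
def leeDist {d n : ℕ} [NeZero d] (u v : Fin n → ZMod d) : ℕ :=
  ∑ i, leeDistL (u i) (v i)

/-- `u` has a `k`-Lee-error border. -/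
def hasKLeeErrorBorder {d n : ℕ} [NeZero d] (u : Fin n → ZMod d) (k : ℕ) : Prop :=
  ∃ m : ℕ, 0 < m ∧ ∃ h : m < n,
    leeDist (fun i : Fin m => u ⟨i.1, by have := i.isLt; omega⟩)
      (fun i : Fin m => u ⟨n - m + i.1, by have := i.isLt; omega⟩) = k

/-- The `d`-ary `n`-cube `Q_n^d`. -/
def QGraph (n d : ℕ) : SimpleGraph (Fin n → ZMod d) where
  Adj u v := ∃ i, u i ≠ v i ∧ (v i = u i + 1 ∨ v i = u i - 1) ∧ ∀ j, j ≠ i → u j = v j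
  symm := by
    constructor
    rintro u v ⟨i, hne, hpm, hrest⟩
    refine ⟨i, hne.symm, ?_, fun j hj => (hrest j hj).symm⟩
    rcases hpm with h | h
    · right; rw [h]; ring
    · left; rw [h]; ring
  loopless := by constructor; rintro u ⟨i, hne, -⟩; exact hne rfl

/-- `f` is Lee-isometric: for all `n`, the subgraph of `Q_n^d` induced on `f`-free words
is isometric in `Q_n^d`. -/
def LeeIsometric {l d : ℕ} (f : Fin l → ZMod d) : Prop :=
  ∀ (n : ℕ) (u v : Fin n → ZMod d) (hu : Free f u) (hv : Free f v),
    ((QGraph n d).induce {w | Free f w}).dist ⟨u, hu⟩ ⟨v, hv⟩ = (QGraph n d).dist u v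

/-!
If `f` has no 2-error border, two distinct `f`-free words `u`, `v` always admit a position
where changing `u` to the letter of `v` keeps it `f`-free. Otherwise every differing position
`p` lies in a window where this change creates `f`; since `v` is `f`-free, that window contains
a second differing position, and two differing positions lying in each other's windows would
compare `f` with a shift of itself with exactly two mismatches. A leftmost-window argument shows
that these constraints cannot all hold.

Conversely, let `q` be the largest shift at which `f` has exactly two mismatches `a < b`. On the
overlay of `f` with its shift by `q`, the two conflicts at `a + q` and `b + q` can be resolved in
opposite ways. Both words are at distance 2, and changing either letter creates `f`. The second
word is always `f`-free, and if the first one is not, the maximality of `q` forces `f` to be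
`t`-periodic apart from a single break at `b`, with `q = 2t`, `b < 2t` and `l ≤ b + 3t`. In that
case two `f`-free words at distance 3, built on the overlay with shift `3t`, are stuck in the
same way.
-/

section Words

variable {A : Type*} {l : ℕ}

theorem exists_extension (f : Fin l → A) (hl : 0 < l) : ∃ F : ℕ → A, ∀ i : Fin l, F i = f i :=
  ⟨fun y => if h : y < l then f ⟨y, h⟩ else f ⟨0, hl⟩, fun i => dif_pos i.isLt⟩

theorem occursAt_comp_val_iff {f : Fin l → A} {F : ℕ → A} (hF : ∀ i : Fin l, F i = f i)
    {W : ℕ → A} {N j : ℕ} :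
    occursAt f (fun x : Fin N => W x) j ↔ j + l ≤ N ∧ ∀ y < l, W (j + y) = F y := by
  constructor
  · rintro ⟨hj, h⟩
    exact ⟨hj, fun y hy => (h ⟨y, hy⟩).trans (hF ⟨y, hy⟩).symm⟩
  · rintro ⟨hj, h⟩
    exact ⟨hj, fun i => by rw [← hF]; exact h i i.isLt⟩

theorem free_comp_val_iff {f : Fin l → A} {F : ℕ → A} (hF : ∀ i : Fin l, F i = f i)
    {W : ℕ → A} {N : ℕ} :
    Free f (fun x : Fin N => W x) ↔ ∀ j, j + l ≤ N → ∃ y < l, W (j + y) ≠ F y := by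
  simp only [Free, occursAt_comp_val_iff hF]
  push Not
  rfl

theorem update_comp_val {N : ℕ} (W : ℕ → A) (p : Fin N) (c : A) :
    Function.update (fun x : Fin N => W x) p c = fun x : Fin N => Function.update W p c x :=
  (Function.update_comp_eq_of_injective W Fin.val_injective p c).symm

end Words

theorem hammingDist_update_eq {ι : Type*} [Fintype ι] [DecidableEq ι] {β : ι → Type*}
    [∀ i, DecidableEq (β i)] {u v : ∀ i, β i} {p : ι} (hp : u p ≠ v p) :
    hammingDist u v = hammingDist (Function.update u p (v p)) v + 1 := by
  have hfilter : (Finset.univ.filter fun i => Function.update u p (v p) i ≠ v i)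
      = (Finset.univ.filter fun i => u i ≠ v i).erase p := by
    ext i
    rcases eq_or_ne i p with rfl | h
    · simp
    · simp [h]
  rw [hammingDist, hammingDist, hfilter, Finset.card_erase_add_one (by simpa using hp)]

section Transform

variable {A : Type*} [DecidableEq A] {l n : ℕ} {f : Fin l → A}

theorem freeTransform_of_path {u v : Fin n → A} {d : ℕ} (hd : hammingDist u v = d)
    (w : Fin (d + 1) → Fin n → A) (h0 : w 0 = u) (hlast : w (Fin.last d) = v)
    (hfree : ∀ j, Free f (w j))
    (hstep : ∀ j : Fin d, ∃ p, w j.castSucc p ≠ v p ∧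
      w j.succ = Function.update (w j.castSucc) p (v p)) :
    FreeTransform f u v := by
  subst hd
  exact ⟨w, h0, hlast, hfree, hstep⟩

theorem freeTransform_self {u : Fin n → A} (hu : Free f u) : FreeTransform f u u :=
  freeTransform_of_path (hammingDist_self u) (fun _ => u) rfl rfl (fun _ => hu) Fin.elim0

theorem FreeTransform.of_update {u v : Fin n → A} {p : Fin n} (hp : u p ≠ v p) (hu : Free f u)
    (h : FreeTransform f (Function.update u p (v p)) v) : FreeTransform f u v := by
  obtain ⟨w, h0, hlast, hfree, hstep⟩ := h
  refine freeTransform_of_path (hammingDist_update_eq hp) (Fin.cons u w) rfl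
    (by rw [← Fin.succ_last, Fin.cons_succ, hlast]) ?_ ?_
  · exact Fin.cases hu fun j => by simpa using hfree j
  · refine Fin.cases ⟨p, hp, by simpa using h0⟩ fun j => ?_
    simpa [← Fin.succ_castSucc] using hstep j

theorem hammingIsometric_of_exists_free_update
    (h : ∀ (n : ℕ) (u v : Fin n → A), Free f u → Free f v → u ≠ v →
      ∃ p, u p ≠ v p ∧ Free f (Function.update u p (v p))) :
    HammingIsometric f := by
  intro n u v hu hv
  induction hd : hammingDist u v generalizing u with
  | zero => exact hammingDist_eq_zero.mp hd ▸ freeTransform_self hu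
  | succ d ih =>
    obtain ⟨p, hp, hfree⟩ := h n u v hu hv (hammingDist_pos.mp (by omega))
    refine FreeTransform.of_update hp hu (ih _ hfree ?_)
    rw [hammingDist_update_eq hp] at hd
    omega

theorem not_hammingIsometric_of_stuck {u v : Fin n → A} (hu : Free f u) (hv : Free f v)
    (hne : u ≠ v) (hstuck : ∀ p, u p ≠ v p → ¬ Free f (Function.update u p (v p))) :
    ¬ HammingIsometric f := by
  intro hiso
  obtain ⟨w, h0, -, hfree, hstep⟩ := hiso n u v hu hv
  obtain ⟨p, hp, hw⟩ := hstep ⟨0, hammingDist_pos.mpr hne⟩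
  rw [show w (Fin.castSucc ⟨0, _⟩) = u from h0] at hp hw
  exact hstuck p hp (hw ▸ hfree _)

theorem not_hammingIsometric_of_stuck_nat {F : ℕ → A} (hF : ∀ i : Fin l, F i = f i) {N : ℕ}
    {U V : ℕ → A} (hU : Free f (fun x : Fin N => U x)) (hV : Free f (fun x : Fin N => V x))
    (hne : ∃ x < N, U x ≠ V x)
    (hstuck : ∀ x < N, U x ≠ V x →
      ∃ j, j + l ≤ N ∧ ∀ y < l, Function.update U x (V x) (j + y) = F y) :
    ¬ HammingIsometric f := by
  refine not_hammingIsometric_of_stuck hU hV ?_ fun p hp hfree => ?_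
  · obtain ⟨x, hx, hUV⟩ := hne
    exact fun h => hUV (congrFun h ⟨x, hx⟩)
  · obtain ⟨j, hj, hocc⟩ := hstuck p p.isLt hp
    rw [update_comp_val] at hfree
    exact hfree j ((occursAt_comp_val_iff hF).mpr ⟨hj, hocc⟩)

end Transform

section Mismatches

variable {A : Type*} [DecidableEq A]

def mismatches (F : ℕ → A) (l q : ℕ) : Finset ℕ :=
  (Finset.range (l - q)).filter fun y => F y ≠ F (y + q)

theorem mem_mismatches {F : ℕ → A} {l q y : ℕ} :
    y ∈ mismatches F l q ↔ y + q < l ∧ F y ≠ F (y + q) := by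
  simp only [mismatches, Finset.mem_filter, Finset.mem_range, Nat.lt_sub_iff_add_lt]

theorem hasKErrorBorder_iff {l : ℕ} {f : Fin l → A} {F : ℕ → A}
    (hF : ∀ i : Fin l, F i = f i) (k : ℕ) :
    hasKErrorBorder f k ↔ ∃ q, 0 < q ∧ q < l ∧ (mismatches F l q).card = k := by
  have hdist : ∀ m (hm : m ≤ l), hammingDist (fun i : Fin m => f ⟨i.1, by omega⟩)
      (fun i : Fin m => f ⟨l - m + i.1, by omega⟩) = (mismatches F l (l - m)).card := by
    intro m hm
    rw [hammingDist, mismatches, Finset.card_filter, Finset.card_filter,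
      show l - (l - m) = m by omega, ← Fin.sum_univ_eq_sum_range]
    refine Finset.sum_congr rfl fun i _ => ?_
    simp only [← hF, Nat.add_comm (l - m)]
  constructor
  · rintro ⟨m, hm0, hml, hk⟩
    exact ⟨l - m, by omega, by omega, by rw [← hdist m hml.le, hk]⟩
  · rintro ⟨q, hq0, hql, hk⟩
    refine ⟨l - q, by omega, by omega, ?_⟩
    rw [hdist _ (by omega), show l - (l - q) = q by omega, hk]

end Mismatches

theorem Finset.eq_empty_of_windows {ι : Type*} [LinearOrder ι] (D : Finset ι) (W : ι → Set ι)
    (hconn : ∀ p ∈ D, (W p).OrdConnected) (hself : ∀ p ∈ D, p ∈ W p)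
    (hother : ∀ p ∈ D, ∃ z ∈ D, z ≠ p ∧ z ∈ W p)
    (hmut : ∀ p ∈ D, ∀ y ∈ D, p ≠ y → y ∈ W p → p ∉ W y) : D = ∅ := by
  classical
  -- For a least `p` violating this, the largest `s < p` in `D` lies in the window of `p`; the
  -- other element of `D` in the window of `s` lies neither left of `s` (minimality of `p`) nor
  -- strictly between `s` and `p`, so `p` lies in the window of `s`.
  have hleft : ∀ p ∈ D, ∀ y ∈ D, y < p → y ∉ W p := by
    by_contra! hbad
    set B := D.filter fun p => ∃ y ∈ D, y < p ∧ y ∈ W p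
    have hB : B.Nonempty := by
      obtain ⟨p, hp, y, hy, hyp, hyW⟩ := hbad
      exact ⟨p, Finset.mem_filter.mpr ⟨hp, y, hy, hyp, hyW⟩⟩
    obtain ⟨hpD, y, hyD, hyp, hyW⟩ := Finset.mem_filter.mp (B.min'_mem hB)
    set p := B.min' hB
    have hL : (D.filter (· < p)).Nonempty := ⟨y, Finset.mem_filter.mpr ⟨hyD, hyp⟩⟩
    obtain ⟨hsD, hsp⟩ := Finset.mem_filter.mp ((D.filter (· < p)).max'_mem hL)
    set s := (D.filter (· < p)).max' hL
    have hys : y ≤ s := (D.filter (· < p)).le_max' y (Finset.mem_filter.mpr ⟨hyD, hyp⟩)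
    have hsW : s ∈ W p := (hconn p hpD).out hyW (hself p hpD) ⟨hys, hsp.le⟩
    obtain ⟨z, hzD, hzs, hzW⟩ := hother s hsD
    rcases hzs.lt_or_gt with hzs | hzs
    · exact (B.min'_le s (Finset.mem_filter.mpr ⟨hsD, z, hzD, hzs, hzW⟩)).not_gt hsp
    · have hpz : p ≤ z := by
        by_contra! hzp
        exact ((D.filter (· < p)).le_max' z (Finset.mem_filter.mpr ⟨hzD, hzp⟩)).not_gt hzs
      exact hmut p hpD s hsD hsp.ne' hsW
        ((hconn s hsD).out (hself s hsD) hzW ⟨hsp.le, hpz⟩)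
  by_contra hne
  obtain ⟨m, hmD, hmax⟩ := D.exists_max_image id (Finset.nonempty_iff_ne_empty.mpr hne)
  obtain ⟨z, hzD, hzm, hzW⟩ := hother m hmD
  exact hleft m hmD z hzD ((hmax z hzD).lt_of_ne hzm) hzW

section Windows

variable {A : Type*} {l n : ℕ}

def OccursExceptAt (F : ℕ → A) (l : ℕ) (u : Fin n → A) (J : ℕ) (P : Fin n) : Prop :=
  ∀ x : Fin n, (x : ℕ) ∈ Set.Ico J (J + l) → (u x = F (x - J) ↔ x ≠ P)

variable [DecidableEq A] {f : Fin l → A} {F : ℕ → A} {u : Fin n → A}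

theorem mismatches_eq_of_occursExceptAt {J₁ J₂ : ℕ} {P Y : Fin n} (hJ : J₁ < J₂)
    (hn : J₁ + l ≤ n) (h₁ : OccursExceptAt F l u J₁ P) (h₂ : OccursExceptAt F l u J₂ Y)
    (hPY : P ≠ Y) (hP : (P : ℕ) ∈ Set.Ico J₂ (J₁ + l))
    (hY : (Y : ℕ) ∈ Set.Ico J₂ (J₁ + l)) :
    mismatches F l (J₂ - J₁) = {P - J₂, Y - J₂} := by
  obtain ⟨hP₂, hP₁⟩ := hP
  obtain ⟨hY₂, hY₁⟩ := hY
  ext y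
  simp only [mem_mismatches, Finset.mem_insert, Finset.mem_singleton]
  constructor
  · rintro ⟨hy, hne⟩
    by_contra! hxy
    set x : Fin n := ⟨J₂ + y, by omega⟩
    have hxP : x ≠ P := fun h => hxy.1 (by rw [← h]; simp [x])
    have hxY : x ≠ Y := fun h => hxy.2 (by rw [← h]; simp [x])
    have e₁ := (h₁ x ⟨by simp [x]; omega, by simp [x]; omega⟩).mpr hxP
    have e₂ := (h₂ x ⟨by simp [x], by simp [x]; omega⟩).mpr hxY
    simp only [x] at e₁ e₂
    rw [show J₂ + y - J₁ = y + (J₂ - J₁) by omega] at e₁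
    rw [Nat.add_sub_cancel_left] at e₂
    exact hne (e₂.symm.trans e₁)
  · rintro (rfl | rfl)
    · refine ⟨by omega, fun h => ?_⟩
      have e₁ := mt (h₁ P ⟨by omega, by omega⟩).mp (not_not.mpr rfl)
      have e₂ := (h₂ P ⟨hP₂, by omega⟩).mpr hPY
      rw [show (P : ℕ) - J₂ + (J₂ - J₁) = P - J₁ by omega, ← e₂] at h
      exact e₁ h
    · refine ⟨by omega, fun h => ?_⟩
      have e₁ := (h₁ Y ⟨by omega, by omega⟩).mpr hPY.symm
      have e₂ := mt (h₂ Y ⟨hY₂, by omega⟩).mp (not_not.mpr rfl)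
      rw [show (Y : ℕ) - J₂ + (J₂ - J₁) = Y - J₁ by omega, ← e₁] at h
      exact e₂ h.symm

theorem hasKErrorBorder_two_of_occursExceptAt (hF : ∀ i : Fin l, F i = f i)
    {J₁ J₂ : ℕ} {P Y : Fin n} (hn₁ : J₁ + l ≤ n) (hn₂ : J₂ + l ≤ n)
    (h₁ : OccursExceptAt F l u J₁ P) (h₂ : OccursExceptAt F l u J₂ Y) (hPY : P ≠ Y)
    (hP₁ : (P : ℕ) ∈ Set.Ico J₁ (J₁ + l)) (hY₁ : (Y : ℕ) ∈ Set.Ico J₁ (J₁ + l))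
    (hP₂ : (P : ℕ) ∈ Set.Ico J₂ (J₂ + l)) (hY₂ : (Y : ℕ) ∈ Set.Ico J₂ (J₂ + l)) :
    hasKErrorBorder f 2 := by
  have hJ : J₁ ≠ J₂ := by
    rintro rfl
    exact ((h₁ Y hY₁).mpr hPY.symm ▸ (h₂ Y hY₂).mp) rfl rfl
  wlog hlt : J₁ < J₂ generalizing J₁ J₂ P Y
  · exact this hn₂ hn₁ h₂ h₁ hPY.symm hY₂ hP₂ hY₁ hP₁ hJ.symm (by omega)
  have hq := mismatches_eq_of_occursExceptAt hlt hn₁ h₁ h₂ hPY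
    ⟨hP₂.1, hP₁.2⟩ ⟨hY₂.1, hY₁.2⟩
  simp only [Set.mem_Ico] at hP₁ hY₁ hP₂ hY₂
  refine (hasKErrorBorder_iff hF 2).mpr ⟨J₂ - J₁, by omega, by omega, ?_⟩
  rw [hq, Finset.card_pair]
  intro h
  exact hPY (Fin.ext (by omega))

theorem exists_window_of_not_free_update (hF : ∀ i : Fin l, F i = f i) {v : Fin n → A}
    (hu : Free f u) (hv : Free f v) {p : Fin n} (hp : u p ≠ v p)
    (hflip : ¬ Free f (Function.update u p (v p))) :
    ∃ J, J + l ≤ n ∧ OccursExceptAt F l u J p ∧ (p : ℕ) ∈ Set.Ico J (J + l) ∧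
      ∃ z, u z ≠ v z ∧ z ≠ p ∧ (z : ℕ) ∈ Set.Ico J (J + l) := by
  simp only [Free, not_forall, not_not] at hflip
  obtain ⟨J, hJn, hJ⟩ := hflip
  have hval : ∀ x : Fin n, (x : ℕ) ∈ Set.Ico J (J + l) →
      Function.update u p (v p) x = F (x - J) := by
    rintro x ⟨h₁, h₂⟩
    rw [hF ⟨x - J, by omega⟩, ← hJ]
    congr
    ext
    simp only
    omega
  have hup : ∀ x : Fin n, (x : ℕ) ∈ Set.Ico J (J + l) → x ≠ p → u x = F (x - J) :=
    fun x hx hxp => by rw [← hval x hx, Function.update_of_ne hxp]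
  have hFi : ∀ i : Fin l, F (J + i - J) = f i := by simp [hF]
  have hpJ : (p : ℕ) ∈ Set.Ico J (J + l) := by
    by_contra hpJ
    refine hu J ⟨hJn, fun i => ?_⟩
    have hx : J + (i : ℕ) ∈ Set.Ico J (J + l) := ⟨by omega, by omega⟩
    exact (hup _ hx fun h => hpJ (h ▸ hx)).trans (hFi i)
  have hvp : v p = F (p - J) := by simpa using hval p hpJ
  refine ⟨J, hJn, fun x hx => ⟨?_, hup x hx⟩, hpJ, ?_⟩
  · rintro hx rfl
    exact hp (hx.trans hvp.symm)
  obtain ⟨i, hi⟩ : ∃ i : Fin l, v ⟨J + i, by omega⟩ ≠ f i := by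
    by_contra! h
    exact hv J ⟨hJn, h⟩
  have hx : J + (i : ℕ) ∈ Set.Ico J (J + l) := ⟨by omega, by omega⟩
  have hzp : (⟨J + i, by omega⟩ : Fin n) ≠ p := by
    rintro rfl
    exact hi (hvp.trans (hFi i))
  exact ⟨_, fun h => hi (h ▸ (hup _ hx hzp).trans (hFi i)), hzp, hx⟩

theorem exists_free_update (hF : ∀ i : Fin l, F i = f i) (hnb : ¬ hasKErrorBorder f 2)
    {v : Fin n → A} (hu : Free f u) (hv : Free f v) (hne : u ≠ v) :
    ∃ p, u p ≠ v p ∧ Free f (Function.update u p (v p)) := by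
  by_contra! hstuck
  choose! J hJ using fun p (hp : u p ≠ v p) =>
    exists_window_of_not_free_update hF hu hv hp (hstuck p hp)
  set D := Finset.univ.filter fun p => u p ≠ v p
  have hD : ∀ {p}, p ∈ D ↔ u p ≠ v p := by simp [D]
  refine Finset.nonempty_iff_ne_empty.mp ?_ (D.eq_empty_of_windows
    (fun p => Fin.val ⁻¹' Set.Ico (J p) (J p + l))
    (fun p _ => Set.ordConnected_Ico.preimage_mono Fin.val_strictMono.monotone)
    (fun p hp => (hJ p (hD.mp hp)).2.2.1)
    (fun p hp => ?_) (fun p hp y hy hpy hyp hpy' => ?_))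
  · obtain ⟨p, hp⟩ := Function.ne_iff.mp hne
    exact ⟨p, hD.mpr hp⟩
  · obtain ⟨z, hz, hzp, hzJ⟩ := (hJ p (hD.mp hp)).2.2.2
    exact ⟨z, hD.mpr hz, hzp, hzJ⟩
  · obtain ⟨hpn, hpocc, hpp, -⟩ := hJ p (hD.mp hp)
    obtain ⟨hyn, hyocc, hyy, -⟩ := hJ y (hD.mp hy)
    exact hnb (hasKErrorBorder_two_of_occursExceptAt hF hpn hyn hpocc hyocc hpy hpp hyp hpy'
      hyy)

end Windows

theorem hammingIsometric_of_not_hasKErrorBorder {A : Type*} [DecidableEq A] {l : ℕ}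
    {f : Fin l → A} (hnb : ¬ hasKErrorBorder f 2) : HammingIsometric f := by
  rcases Nat.eq_zero_or_pos l with rfl | hl
  · exact fun n u v hu => absurd (hu 0) fun h => h ⟨by omega, fun i => i.elim0⟩
  obtain ⟨F, hF⟩ := exists_extension f hl
  exact hammingIsometric_of_exists_free_update fun n u v hu hv hne =>
    exists_free_update hF hnb hu hv hne

section SingleBreak

variable {A : Type*} {F : ℕ → A} {l t c : ℕ}

def PeriodicExcept (F : ℕ → A) (l t c : ℕ) : Prop :=
  ∀ y, y + t < l → y ≠ c → F y = F (y + t)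

theorem PeriodicExcept.ne_add_mul_iff (hper : PeriodicExcept F l t c) (hc : F c ≠ F (c + t))
    {k y : ℕ} (hy : y + k * t < l) : F y ≠ F (y + k * t) ↔ ∃ i < k, y + i * t = c := by
  induction k generalizing y with
  | zero => simp
  | succ k ih =>
    have hy' : y + t + k * t < l := by rw [add_one_mul] at hy; omega
    rw [show y + (k + 1) * t = y + t + k * t by ring]
    by_cases hyc : y = c
    · subst hyc
      have hrest : F (y + t) = F (y + t + k * t) := by
        by_contra h
        obtain ⟨i, -, hi⟩ := (ih hy').mp h
        have : 0 < t := Nat.pos_of_ne_zero fun h0 => hc (by simp [h0])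
        omega
      exact ⟨fun _ => ⟨0, by omega, by simp⟩, fun _ => hrest ▸ hc⟩
    · rw [hper y (by omega) hyc, ih hy']
      constructor
      · rintro ⟨i, hi, hic⟩
        exact ⟨i + 1, by omega, by rw [← hic, add_one_mul]; ring⟩
      · rintro ⟨_ | i, hi, hic⟩
        · simp only [zero_mul, add_zero] at hic
          exact absurd hic hyc
        · exact ⟨i, by omega, by rw [← hic, add_one_mul]; ring⟩

theorem PeriodicExcept.eq_add_mul (hper : PeriodicExcept F l t c) (hc : F c ≠ F (c + t))
    {k y : ℕ} (hy : y + k * t < l) (hne : ∀ i < k, y + i * t ≠ c) : F y = F (y + k * t) := by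
  by_contra h
  obtain ⟨i, hi, hic⟩ := (hper.ne_add_mul_iff hc hy).mp h
  exact hne i hi hic

variable [DecidableEq A]

theorem PeriodicExcept.mismatches_mul_eq (hper : PeriodicExcept F l t c)
    (hc : F c ≠ F (c + t)) {r K k : ℕ} (hr : r < t) (hcr : r + K * t = c) (hK : 0 < K)
    (hKk : K < k) (hkl : r + (k + 1) * t < l) (hlk : l ≤ r + (k + 2) * t) :
    mismatches F l (k * t) = {r, r + t} := by
  ext y
  simp only [mem_mismatches, Finset.mem_insert, Finset.mem_singleton]
  constructor
  · rintro ⟨hy, hne⟩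
    obtain ⟨i, hik, hic⟩ := (hper.ne_add_mul_iff hc hy).mp hne
    have hiK : i ≤ K := by
      by_contra! h
      have := Nat.mul_le_mul_right t (show K + 1 ≤ i from h)
      rw [add_one_mul] at this
      omega
    obtain ⟨d, rfl⟩ := Nat.exists_eq_add_of_le hiK
    have hd : d < 2 := by
      by_contra! h
      have := Nat.mul_le_mul_right t h
      simp only [add_mul] at hcr hlk this
      omega
    interval_cases d <;> simp only [add_mul] at hcr <;> omega
  · have hrk : r + k * t < l := by rw [add_one_mul] at hkl; omega
    rintro (rfl | rfl)
    · exact ⟨hrk, (hper.ne_add_mul_iff hc hrk).mpr ⟨K, hKk, hcr⟩⟩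
    · have hrk' : r + t + k * t < l := by rw [add_one_mul] at hkl; omega
      obtain ⟨K', rfl⟩ := Nat.exists_eq_add_one_of_ne_zero hK.ne'
      exact ⟨hrk', (hper.ne_add_mul_iff hc hrk').mpr ⟨K', by omega, by rw [← hcr]; ring⟩⟩

theorem PeriodicExcept.exists_two_mismatches (hper : PeriodicExcept F l t c)
    (hc : F c ≠ F (c + t)) (ht : 0 < t) (htc : t ≤ c) (hcl : c + 2 * t < l)
    (hlong : ¬ (c < 2 * t ∧ l ≤ c + 3 * t)) :
    ∃ s, 2 * t < s ∧ (mismatches F l s).card = 2 := by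
  -- The shift is `k * t` for the largest `k` with `c % t + (k + 1) * t < l`; its mismatches
  -- are exactly `c % t` and `c % t + t`.
  have hcr : c % t + c / t * t = c := Nat.mod_add_div' c t
  have hr := Nat.mod_lt c ht
  have hK : 0 < c / t := Nat.div_pos htc ht
  have hlm : (l - 1 - c % t) % t + (l - 1 - c % t) / t * t = l - 1 - c % t :=
    Nat.mod_add_div' _ t
  have hs := Nat.mod_lt (l - 1 - c % t) ht
  set r := c % t
  set K := c / t
  set m := (l - 1 - r) / t
  have hKm : K + 2 ≤ m := by
    by_contra! h
    have := Nat.mul_le_mul_right t (show m ≤ K + 1 by omega)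
    simp only [add_mul, one_mul] at this
    omega
  have hm : 4 ≤ m := by
    by_contra! h
    have := Nat.mul_le_mul_right t (show m ≤ 3 by omega)
    have hK1 : K = 1 := by omega
    rw [hK1, one_mul] at hcr
    exact hlong ⟨by omega, by omega⟩
  clear_value r K m
  obtain ⟨k, rfl⟩ : ∃ k, m = k + 1 := ⟨m - 1, by omega⟩
  refine ⟨k * t, ?_, ?_⟩
  · have := Nat.mul_le_mul_right t (show 3 ≤ k by omega)
    omega
  rw [hper.mismatches_mul_eq hc hr hcr hK (by omega) ?_ ?_, Finset.card_pair (by omega)]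
  · omega
  · simp only [add_mul, one_mul] at hlm ⊢
    omega

end SingleBreak

section Overlay

variable {A : Type*} {l : ℕ} {f : Fin l → A} {F : ℕ → A}

def overlay (F : ℕ → A) (l q : ℕ) : ℕ → A := fun x => if x < l then F x else F (x - q)

variable {W : ℕ → A} {P j q : ℕ}

theorem eq_add_of_occurs_overlay (hW : ∀ x ≠ P, W x = overlay F l q x)
    (hocc : ∀ y < l, W (j + y) = F y) {y : ℕ} (hy : y + j < l) (hyP : y + j ≠ P) :
    F y = F (y + j) := by
  rw [← hocc y (by omega), hW _ (by omega), overlay, if_pos (by omega), add_comm]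

theorem eq_add_sub_of_occurs_overlay (hP : P < l) (hW : ∀ x ≠ P, W x = overlay F l q x)
    (hocc : ∀ y < l, W (j + y) = F y) (hjq : j ≤ q) {y : ℕ} (hy : l ≤ y + q)
    (hyj : y + q < l + j) : F y = F (y + q - j) := by
  have h := hocc (y + q - j) (by omega)
  rw [show j + (y + q - j) = y + q by omega, hW _ (by omega), overlay, if_neg (by omega),
    Nat.add_sub_cancel] at h
  exact h

variable [DecidableEq A]

theorem add_mem_mismatches_of_occurs_overlay (hP : P < l)
    (hW : ∀ x ≠ P, W x = overlay F l q x) (hocc : ∀ y < l, W (j + y) = F y) (hjq : j ≤ q)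
    {x : ℕ} (hx : x ∈ mismatches F l q) (hxP : x + j ≠ P) (hxqP : x + q + j ≠ P) :
    x + j ∈ mismatches F l q := by
  rw [mem_mismatches] at hx ⊢
  have hxj := eq_add_of_occurs_overlay hW hocc (by omega) hxP
  by_cases h : x + j + q < l
  · refine ⟨h, fun h' => hx.2 ?_⟩
    rw [hxj, h', eq_add_of_occurs_overlay hW hocc (by omega) hxqP, add_right_comm]
  · have := eq_add_sub_of_occurs_overlay hP hW hocc hjq (y := x + j) (by omega) (by omega)
    rw [show x + j + q - j = x + q by omega] at this
    exact absurd (hxj.trans this) hx.2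

variable {a b : ℕ}

theorem free_overlay_update_right (hF : ∀ i : Fin l, F i = f i) (hab : a < b)
    (hq : mismatches F l q = {a, b}) :
    Free f (fun x : Fin (l + q) => Function.update (overlay F l q) (b + q) (F b) x) := by
  have hmem : ∀ {y}, y ∈ mismatches F l q ↔ y = a ∨ y = b := by simp [hq]
  have ha := mem_mismatches.mp (hmem.mpr (Or.inl rfl))
  have hb := mem_mismatches.mp (hmem.mpr (Or.inr rfl))
  have hW : ∀ x ≠ b + q, Function.update (overlay F l q) (b + q) (F b) x = overlay F l q x :=
    fun x hx => Function.update_of_ne hx _ _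
  rw [free_comp_val_iff hF]
  intro j hj
  by_contra! hocc
  rcases Nat.eq_zero_or_pos j with rfl | hj0
  · have h := hocc (b + q) hb.1
    rw [zero_add, Function.update_self] at h
    exact hb.2 h
  rcases (show j ≤ q by omega).eq_or_lt with rfl | hjq
  · have h := hocc a (by omega)
    rw [hW _ (by omega), overlay, if_pos (by omega), add_comm] at h
    exact ha.2 h.symm
  have := hmem.mp (add_mem_mismatches_of_occurs_overlay hb.1 hW hocc hjq.le
    (hmem.mpr (Or.inr rfl)) (by omega) (by omega))
  omega

theorem periodicExcept_of_occurs_overlay_update_left (hab : a < b)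
    (hq : mismatches F l q = {a, b}) (hj : j ≤ q)
    (hocc : ∀ y < l, Function.update (overlay F l q) (a + q) (F a) (j + y) = F y) :
    q = 2 * j ∧ b = a + j ∧ PeriodicExcept F l j b ∧ F b ≠ F (b + j) := by
  have hmem : ∀ {y}, y ∈ mismatches F l q ↔ y = a ∨ y = b := by simp [hq]
  have ha := mem_mismatches.mp (hmem.mpr (Or.inl rfl))
  have hb := mem_mismatches.mp (hmem.mpr (Or.inr rfl))
  have hW : ∀ x ≠ a + q, Function.update (overlay F l q) (a + q) (F a) x = overlay F l q x :=
    fun x hx => Function.update_of_ne hx _ _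
  have hj0 : j ≠ 0 := by
    rintro rfl
    have h := hocc (a + q) ha.1
    rw [zero_add, Function.update_self] at h
    exact ha.2 h
  have hjq : j ≠ q := by
    rintro rfl
    have h := hocc b (by omega)
    rw [hW _ (by omega), overlay, if_pos (by omega), add_comm] at h
    exact hb.2 h.symm
  have hba : b = a + j := by
    have := hmem.mp (add_mem_mismatches_of_occurs_overlay ha.1 hW hocc hj
      (hmem.mpr (Or.inl rfl)) (by omega) (by omega))
    omega
  subst hba
  have hq2 : q = 2 * j := by
    by_contra hq2
    have := hmem.mp (add_mem_mismatches_of_occurs_overlay ha.1 hW hocc hj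
      (hmem.mpr (Or.inr rfl)) (by omega) (by omega))
    omega
  subst hq2
  have hper : PeriodicExcept F l j (a + j) := fun y hy hyb =>
    eq_add_of_occurs_overlay hW hocc hy (by omega)
  refine ⟨rfl, rfl, hper, fun h => hb.2 ?_⟩
  rw [h, hper _ (by omega) (by omega), add_assoc, two_mul]

theorem occurs_update_overlay_updates (hab : a < b) (hq : mismatches F l q = {a, b}) {x : ℕ}
    (hx : Function.update (overlay F l q) (a + q) (F a) x ≠
      Function.update (overlay F l q) (b + q) (F b) x) :
    ∃ j, j + l ≤ l + q ∧ ∀ y < l, Function.update (Function.update (overlay F l q) (a + q) (F a))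
      x (Function.update (overlay F l q) (b + q) (F b) x) (j + y) = F y := by
  have hmem : ∀ {y}, y ∈ mismatches F l q ↔ y = a ∨ y = b := by simp [hq]
  have hb := mem_mismatches.mp (hmem.mpr (Or.inr rfl))
  have hx' : x = a + q ∨ x = b + q := by
    by_contra! h
    simp [Function.update_of_ne h.1, Function.update_of_ne h.2] at hx
  rcases hx' with rfl | rfl
  · refine ⟨0, by omega, fun y hy => ?_⟩
    simp only [Function.update_apply]
    split_ifs <;> simp_all [overlay]
  · refine ⟨q, by omega, fun y hy => ?_⟩
    have hy' : y ≠ a → y ≠ b → y + q < l → F (q + y) = F y := fun hya hyb h => by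
      by_contra hne
      have := hmem.mp (mem_mismatches.mpr ⟨h, fun e => hne (by rw [add_comm, e])⟩)
      omega
    simp only [Function.update_apply, overlay]
    split_ifs with h₁ h₂ h₃
    · rw [show y = b by omega]
    · rw [show y = a by omega]
    · exact hy' (by omega) (by omega) (by omega)
    · rw [Nat.add_sub_cancel_left]

end Overlay

section Chain

variable {A : Type*} {l : ℕ} {f : Fin l → A} {F : ℕ → A} {t b : ℕ}

/- Write `α = F b` and `β = F (b + t)`. Along the residue class of `b` modulo `t`, `f` reads
`ααββ` (positions `b - t, …, b + 2t`), while on positions `b - t, …, b + 5t` the overlay with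
shift `3t` reads `ααββαββ`, `chainLeft` reads `αααβαββ` and `chainRight` reads `ααβαβββ`; off
this class all three words are `t`-periodic. Neither word contains `ααββ`, and changing any one
of the three letters where they differ creates it. -/

def chainLeft (F : ℕ → A) (l t b : ℕ) : ℕ → A :=
  Function.update (overlay F l (3 * t)) (b + t) (F b)

def chainRight (F : ℕ → A) (l t b : ℕ) : ℕ → A :=
  Function.update (Function.update (overlay F l (3 * t)) (b + 2 * t) (F b)) (b + 3 * t)
    (F (b + t))

theorem chainLeft_apply (ht : 0 < t) (hbl : b + 2 * t < l) (hlb : l ≤ b + 3 * t) :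
    chainLeft F l t b (b + t) = F b ∧ chainLeft F l t b (b + 2 * t) = F (b + 2 * t) ∧
      chainLeft F l t b (b + 3 * t) = F b := by
  simp only [chainLeft, Function.update_apply, overlay]
  refine ⟨if_pos trivial, ?_, ?_⟩
  · rw [if_neg (by omega), if_pos hbl]
  · rw [if_neg (by omega), if_neg (by omega), Nat.add_sub_cancel]

theorem chainRight_apply (ht : 0 < t) (hbl : b + 2 * t < l) :
    chainRight F l t b (b + t) = F (b + t) ∧ chainRight F l t b (b + 2 * t) = F b ∧
      chainRight F l t b (b + 3 * t) = F (b + t) := by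
  simp only [chainRight, Function.update_apply, overlay]
  refine ⟨?_, ?_, if_pos trivial⟩
  · rw [if_neg (by omega), if_neg (by omega), if_pos (by omega)]
  · rw [if_neg (by omega), if_pos trivial]

theorem PeriodicExcept.apply_sub_eq_and_apply_add_eq (hper : PeriodicExcept F l t b)
    (ht : 0 < t) (htb : t ≤ b) (hbl : b + 2 * t < l) :
    F (b - t) = F b ∧ F (b + 2 * t) = F (b + t) := by
  refine ⟨?_, ?_⟩
  · rw [hper (b - t) (by omega) (by omega), Nat.sub_add_cancel htb]
  · rw [hper (b + t) (by omega) (by omega), add_assoc, two_mul]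

theorem PeriodicExcept.overlay_eq_add (hper : PeriodicExcept F l t b) (hc : F b ≠ F (b + t))
    (htb : t ≤ b) (hbl : b + 2 * t < l) {x : ℕ} (hx : x + t < l + 3 * t) (hxb : x ≠ b)
    (hxb₂ : x ≠ b + 2 * t) (hxb₃ : x ≠ b + 3 * t) :
    overlay F l (3 * t) x = overlay F l (3 * t) (x + t) := by
  simp only [overlay]
  split_ifs with h₁ h₂ h₂
  · exact hper x (by omega) hxb
  · have := hper.eq_add_mul hc (k := 2) (y := x - 2 * t) (by omega)
      (by intro i hi; interval_cases i <;> omega)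
    rw [show x + t - 3 * t = x - 2 * t by omega, this, show x - 2 * t + 2 * t = x by omega]
  · omega
  · rw [show x + t - 3 * t = x - 3 * t + t by omega]
    exact hper _ (by omega) (by omega)

theorem PeriodicExcept.occurs_overlay_cases (hper : PeriodicExcept F l t b)
    (hc : F b ≠ F (b + t)) (htb : t ≤ b) (hbl : b + 2 * t < l) {W : ℕ → A}
    (hW : ∀ x, x ≠ b + t → x ≠ b + 2 * t → x ≠ b + 3 * t → W x = overlay F l (3 * t) x)
    {j : ℕ} (hj : j + l ≤ l + 3 * t) (hocc : ∀ y < l, W (j + y) = F y) :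
    j = 0 ∨ j = t ∨ j = 2 * t ∨ j = 3 * t := by
  by_contra! h
  refine hc ?_
  rw [← hocc b (by omega), ← hocc (b + t) (by omega), hW _ (by omega) (by omega) (by omega),
    hW _ (by omega) (by omega) (by omega), ← add_assoc]
  exact hper.overlay_eq_add hc htb hbl (by omega) (by omega) (by omega) (by omega)

theorem free_chainLeft (hF : ∀ i : Fin l, F i = f i) (hper : PeriodicExcept F l t b)
    (hc : F b ≠ F (b + t)) (ht : 0 < t) (htb : t ≤ b) (hbl : b + 2 * t < l)
    (hlb : l ≤ b + 3 * t) :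
    Free f (fun x : Fin (l + 3 * t) => chainLeft F l t b x) := by
  obtain ⟨hFb, hFbt⟩ := hper.apply_sub_eq_and_apply_add_eq ht htb hbl
  obtain ⟨hU₁, hU₂, hU₃⟩ := chainLeft_apply (F := F) ht hbl hlb
  rw [free_comp_val_iff hF]
  intro j hj
  by_contra! hocc
  rcases hper.occurs_overlay_cases hc htb hbl (fun x h _ _ => Function.update_of_ne h _ _)
    hj hocc with h | h | h | h <;> subst j
  · have h := hocc (b + t) (by omega)
    rw [zero_add, hU₁] at h
    exact hc h
  · have h := hocc (b + 2 * t) (by omega)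
    rw [show t + (b + 2 * t) = b + 3 * t by omega, hU₃, hFbt] at h
    exact hc h
  · have h := hocc b (by omega)
    rw [show 2 * t + b = b + 2 * t by omega, hU₂, hFbt] at h
    exact hc h.symm
  · have h := hocc (b - t) (by omega)
    rw [show 3 * t + (b - t) = b + 2 * t by omega, hU₂, hFb, hFbt] at h
    exact hc h.symm

theorem free_chainRight (hF : ∀ i : Fin l, F i = f i) (hper : PeriodicExcept F l t b)
    (hc : F b ≠ F (b + t)) (ht : 0 < t) (htb : t ≤ b) (hbl : b + 2 * t < l) :
    Free f (fun x : Fin (l + 3 * t) => chainRight F l t b x) := by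
  obtain ⟨hFb, hFbt⟩ := hper.apply_sub_eq_and_apply_add_eq ht htb hbl
  obtain ⟨hV₁, hV₂, hV₃⟩ := chainRight_apply (F := F) ht hbl
  rw [free_comp_val_iff hF]
  intro j hj
  by_contra! hocc
  rcases hper.occurs_overlay_cases hc htb hbl (fun x _ h₂ h₃ => by
    rw [chainRight, Function.update_of_ne h₃, Function.update_of_ne h₂]) hj hocc
    with h | h | h | h <;> subst j
  · have h := hocc (b + 2 * t) (by omega)
    rw [zero_add, hV₂, hFbt] at h
    exact hc h
  · have h := hocc b (by omega)
    rw [add_comm, hV₁] at h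
    exact hc h.symm
  · have h := hocc (b - t) (by omega)
    rw [show 2 * t + (b - t) = b + t by omega, hV₁, hFb] at h
    exact hc h.symm
  · have h := hocc b (by omega)
    rw [add_comm, hV₃] at h
    exact hc h.symm

theorem occurs_update_chainLeft (hper : PeriodicExcept F l t b) (hc : F b ≠ F (b + t))
    (ht : 0 < t) (htb : t ≤ b) (hbt : b < 2 * t) (hbl : b + 2 * t < l) (hlb : l ≤ b + 3 * t)
    {x : ℕ} (hx : chainLeft F l t b x ≠ chainRight F l t b x) :
    ∃ j, j + l ≤ l + 3 * t ∧
      ∀ y < l, Function.update (chainLeft F l t b) x (chainRight F l t b x) (j + y) = F y := by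
  obtain ⟨hFb, hFbt⟩ := hper.apply_sub_eq_and_apply_add_eq ht htb hbl
  obtain ⟨hV₁, hV₂, hV₃⟩ := chainRight_apply (F := F) ht hbl
  have hx' : x = b + t ∨ x = b + 2 * t ∨ x = b + 3 * t := by
    by_contra! h
    apply hx
    rw [chainLeft, chainRight, Function.update_of_ne h.1, Function.update_of_ne h.2.2,
      Function.update_of_ne h.2.1]
  rcases hx' with rfl | rfl | rfl
  · refine ⟨0, by omega, fun y hy => ?_⟩
    rw [hV₁, zero_add]
    simp only [chainLeft, Function.update_apply, overlay]
    split_ifs <;> simp_all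
  · refine ⟨3 * t, by omega, fun y hy => ?_⟩
    rw [hV₂]
    simp only [chainLeft, Function.update_apply, overlay]
    split_ifs with h₁ h₂ h₃
    · rw [show y = b - t by omega, hFb]
    · omega
    · rw [add_comm]
      exact (hper.eq_add_mul hc (k := 3) (y := y) (by omega)
        (by intro i hi; interval_cases i <;> omega)).symm
    · rw [Nat.add_sub_cancel_left]
  · refine ⟨t, by omega, fun y hy => ?_⟩
    rw [hV₃]
    simp only [chainLeft, Function.update_apply, overlay]
    split_ifs with h₁ h₂ h₃
    · rw [show y = b + 2 * t by omega, hFbt]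
    · rw [show y = b by omega]
    · rw [add_comm]
      exact (hper y (by omega) (by omega)).symm
    · have := hper.eq_add_mul hc (k := 2) (y := y - 2 * t) (by omega)
        (by intro i hi; interval_cases i <;> omega)
      rw [show t + y - 3 * t = y - 2 * t by omega, this, show y - 2 * t + 2 * t = y by omega]

variable [DecidableEq A]

theorem PeriodicExcept.not_hammingIsometric (hF : ∀ i : Fin l, F i = f i)
    (hper : PeriodicExcept F l t b) (hc : F b ≠ F (b + t)) (ht : 0 < t) (htb : t ≤ b)
    (hbt : b < 2 * t) (hbl : b + 2 * t < l) (hlb : l ≤ b + 3 * t) :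
    ¬ HammingIsometric f := by
  refine not_hammingIsometric_of_stuck_nat hF (free_chainLeft hF hper hc ht htb hbl hlb)
    (free_chainRight hF hper hc ht htb hbl) ⟨b + t, by omega, ?_⟩
    fun x _ hx => occurs_update_chainLeft hper hc ht htb hbt hbl hlb hx
  rw [(chainLeft_apply ht hbl hlb).1, (chainRight_apply ht hbl).1]
  exact hc

end Chain

section Border

variable {A : Type*} [DecidableEq A] {l : ℕ} {f : Fin l → A} {F : ℕ → A}

theorem exists_maximal_shift_of_hasKErrorBorder (hF : ∀ i : Fin l, F i = f i)
    (hb : hasKErrorBorder f 2) :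
    ∃ q a b, a < b ∧ mismatches F l q = {a, b} ∧ ∀ s, q < s → (mismatches F l s).card ≠ 2 := by
  obtain ⟨q₀, -, hq₀l, hcard₀⟩ := (hasKErrorBorder_iff hF 2).mp hb
  set P : ℕ → Prop := fun s => (mismatches F l s).card = 2
  obtain ⟨a, b, hab, hq⟩ :=
    Finset.card_eq_two.mp (Nat.findGreatest_spec (P := P) hq₀l.le hcard₀)
  refine ⟨Nat.findGreatest P l, min a b, max a b, by omega, ?_, fun s hs => ?_⟩
  · rcases le_total a b with h | h
    · rw [hq, min_eq_left h, max_eq_right h]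
    · rw [hq, min_eq_right h, max_eq_left h, Finset.pair_comm]
  · by_cases hsl : s ≤ l
    · exact Nat.findGreatest_is_greatest (P := P) hs hsl
    · simp [mismatches, Nat.sub_eq_zero_of_le (not_le.mp hsl).le]

theorem not_hammingIsometric_of_maximal_shift (hF : ∀ i : Fin l, F i = f i) {q a b : ℕ}
    (hab : a < b) (hq : mismatches F l q = {a, b})
    (hmax : ∀ s, q < s → (mismatches F l s).card ≠ 2) : ¬ HammingIsometric f := by
  have hmem : ∀ {y}, y ∈ mismatches F l q ↔ y = a ∨ y = b := by simp [hq]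
  have ha := mem_mismatches.mp (hmem.mpr (Or.inl rfl))
  have hb := mem_mismatches.mp (hmem.mpr (Or.inr rfl))
  by_cases hU : Free f (fun x : Fin (l + q) => Function.update (overlay F l q) (a + q) (F a) x)
  · refine not_hammingIsometric_of_stuck_nat hF hU (free_overlay_update_right hF hab hq)
      ⟨a + q, by omega, ?_⟩ fun x _ hx => occurs_update_overlay_updates hab hq hx
    rw [Function.update_self, Function.update_of_ne (by omega), overlay, if_pos ha.1]
    exact ha.2
  rw [free_comp_val_iff hF] at hU
  push Not at hU
  obtain ⟨j, hj, hocc⟩ := hU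
  obtain ⟨rfl, rfl, hper, hc⟩ :=
    periodicExcept_of_occurs_overlay_update_left hab hq (by omega) hocc
  have hshort : a + j < 2 * j ∧ l ≤ a + j + 3 * j := by
    by_contra hlong
    obtain ⟨s, hs, hcard⟩ :=
      hper.exists_two_mismatches hc (by omega) (by omega) (by omega) hlong
    exact hmax s hs hcard
  exact hper.not_hammingIsometric hF hc (by omega) (by omega) hshort.1 (by omega) hshort.2

end Border

theorem stmt2 {A : Type*} [DecidableEq A] {l : ℕ} (f : Fin l → A) :
    ¬ HammingIsometric f ↔ hasKErrorBorder f 2 := by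
  refine ⟨fun h => by_contra fun hnb => h (hammingIsometric_of_not_hasKErrorBorder hnb), ?_⟩
  intro hb
  have hl : 0 < l := by
    obtain ⟨m, hm, hml, -⟩ := hb
    omega
  obtain ⟨F, hF⟩ := exists_extension f hl
  obtain ⟨q, a, b, hab, hq, hmax⟩ := exists_maximal_shift_of_hasKErrorBorder hF hb
  exact not_hammingIsometric_of_maximal_shift hF hab hq hmax
end

section
/- If a word f over an alphabet A has no 2-error border, then f is Hamming-isometric: for every n and every pair of f-free words u, v of length n, there is an ordering of the positions where u and v differ such that changing them one at a time transforms u into v through f-free words only. -/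
open Finset

/-!
If no single change of a letter of `u` into the letter of `v` kept `u` `f`-free, every position
`a` where `u` and `v` differ would carry an occurrence of `f`, in `u` with `a` changed, on a
window `W a` of length `l` containing `a`. As `v` is `f`-free, `W a` contains a second differing
position. Two differing positions `a ≠ b` never lie in each other's windows: for equal windows
the two occurrences would force `u b = v b`, and otherwise their overlap is a border of `f`
whose prefix and suffix differ exactly at `a` and `b`. Following these pointers from the
rightmost differing position then yields an infinite strictly decreasing sequence of positions.
So some single change keeps `u` free, and induction on the Hamming distance builds the
transformation.
-/

theorem Finset.eq_empty_of_windows_s4 {n l : ℕ} (S : Finset (Fin n)) (J : Fin n → ℕ)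
    (hself : ∀ a ∈ S, (a : ℕ) ∈ Set.Ico (J a) (J a + l))
    (hnext : ∀ a ∈ S, ∃ b ∈ S, b ≠ a ∧ (b : ℕ) ∈ Set.Ico (J a) (J a + l))
    (hmutual : ∀ a ∈ S, ∀ b ∈ S, a ≠ b → (b : ℕ) ∈ Set.Ico (J a) (J a + l) →
      (a : ℕ) ∉ Set.Ico (J b) (J b + l)) :
    S = ∅ := by
  have step : ∀ a ∈ S, ∀ b ∈ S, b < a → (b : ℕ) ∈ Set.Ico (J a) (J a + l) →
      ∃ c ∈ S, c < b ∧ (c : ℕ) ∈ Set.Ico (J b) (J b + l) := by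
    intro a ha b hb hba hbWa
    obtain ⟨c, hc, hcb, hcWb⟩ := hnext b hb
    refine ⟨c, hc, lt_of_le_of_ne (not_lt.1 fun hbc => ?_) hcb, hcWb⟩
    -- If `c` were right of `b`, then `a` and `c` would lie in each other's windows.
    have haWb := hmutual a ha b hb hba.ne' hbWa
    have hbWc := hmutual b hb c hc hcb.symm hcWb
    have haWa := hself a ha
    have hbWb := hself b hb
    have hcWc := hself c hc
    simp only [Set.mem_Ico, Fin.lt_def] at hba hbc hbWa hcWb haWb hbWc haWa hbWb hcWc
    have hac : a ≠ c := by rintro rfl; omega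
    exact hmutual a ha c hc hac ⟨by omega, by omega⟩ ⟨by omega, by omega⟩
  have no_descent : ∀ b ∈ S, ∀ a ∈ S, b < a → (b : ℕ) ∉ Set.Ico (J a) (J a + l) := by
    intro b
    induction b using WellFoundedLT.induction with
    | ind b ih =>
      intro hb a ha hba hbWa
      obtain ⟨c, hc, hcb, hcWb⟩ := step a ha b hb hba hbWa
      exact ih c hcb hc b hb hcb hcWb
  by_contra hS
  obtain ⟨b, hb, hba, hbWa⟩ := hnext _ (S.max'_mem (nonempty_iff_ne_empty.2 hS))
  exact no_descent b hb _ (S.max'_mem _) (lt_of_le_of_ne (S.le_max' b hb) hba) hbWa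

theorem hammingDist_update_add_one {ι : Type*} [Fintype ι] [DecidableEq ι] {β : ι → Type*}
    [∀ i, DecidableEq (β i)] {u v : ∀ i, β i} {p : ι} (hp : u p ≠ v p) :
    hammingDist (Function.update u p (v p)) v + 1 = hammingDist u v := by
  have hfilter : ({i | Function.update u p (v p) i ≠ v i} : Finset ι) =
      ({i | u i ≠ v i} : Finset ι).erase p := by
    ext i
    by_cases hip : i = p
    · subst hip; simp
    · simp [hip]
  rw [hammingDist, hammingDist, hfilter, Finset.card_erase_add_one (by simpa using hp)]

theorem Function.update_apply_ne_update_apply_iff {ι β : Type*} [DecidableEq ι] {u : ι → β}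
    {a b : ι} {x y : β} (hab : a ≠ b) (hx : u a ≠ x) (hy : u b ≠ y) (q : ι) :
    Function.update u a x q ≠ Function.update u b y q ↔ q = a ∨ q = b := by
  by_cases hqa : q = a
  · subst hqa; simp [hab, Ne.symm hx]
  · by_cases hqb : q = b
    · subst hqb; simp [hqa, hy]
    · simp [hqa, hqb]

section Occurrences

variable {A : Type*} {l n : ℕ} {f : Fin l → A}

theorem occursAt.congr {w₁ w₂ : Fin n → A} {j : ℕ} (h : occursAt f w₁ j)
    (hw : ∀ q : Fin n, (q : ℕ) ∈ Set.Ico j (j + l) → w₁ q = w₂ q) : occursAt f w₂ j := by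
  obtain ⟨hjn, hocc⟩ := h
  exact ⟨hjn, fun i => (hw _ ⟨by simp, by simp⟩).symm.trans (hocc i)⟩

theorem occursAt.apply_eq {w : Fin n → A} {j : ℕ} (h : occursAt f w j) {q : Fin n}
    (hq : (q : ℕ) ∈ Set.Ico j (j + l)) :
    w q = f ⟨q - j, by simp only [Set.mem_Ico] at hq; omega⟩ := by
  obtain ⟨hjn, hocc⟩ := h
  rw [← hocc]
  congr 1
  ext
  simp only [Set.mem_Ico] at hq
  simp only; omega

theorem hasKErrorBorder_of_occursAt [DecidableEq A] {w₁ w₂ : Fin n → A} {j₁ j₂ : ℕ}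
    (h₁ : occursAt f w₁ j₁) (h₂ : occursAt f w₂ j₂) (hlt : j₂ < j₁) (hov : j₁ < j₂ + l) :
    hasKErrorBorder f #{q : Fin n | (q : ℕ) ∈ Set.Ico j₁ (j₂ + l) ∧ w₁ q ≠ w₂ q} := by
  have hn := h₂.1
  refine ⟨j₂ + l - j₁, by omega, by omega, ?_⟩
  rw [hammingDist]
  refine Finset.card_bij (fun i _ => ⟨j₁ + i, by omega⟩) ?_ ?_ ?_
  · intro i hi
    have hW₁ : (j₁ + i : ℕ) ∈ Set.Ico j₁ (j₁ + l) := ⟨by omega, by omega⟩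
    have hW₂ : (j₁ + i : ℕ) ∈ Set.Ico j₂ (j₂ + l) := ⟨by omega, by omega⟩
    simp only [Finset.mem_filter, Finset.mem_univ, true_and] at hi ⊢
    refine ⟨⟨by omega, by omega⟩, ?_⟩
    rw [h₁.apply_eq hW₁, h₂.apply_eq hW₂]
    convert hi using 3 <;> simp only <;> omega
  · intro i _ i' _ h
    ext
    simpa using h
  · intro q hq
    simp only [Finset.mem_filter, Finset.mem_univ, true_and, Set.mem_Ico] at hq
    refine ⟨⟨q - j₁, by omega⟩, ?_, by ext; simp only; omega⟩
    have hW₁ : (q : ℕ) ∈ Set.Ico j₁ (j₁ + l) := ⟨by omega, by omega⟩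
    have hW₂ : (q : ℕ) ∈ Set.Ico j₂ (j₂ + l) := ⟨by omega, by omega⟩
    have hne := hq.2
    rw [h₁.apply_eq hW₁, h₂.apply_eq hW₂] at hne
    simp only [Finset.mem_filter, Finset.mem_univ, true_and]
    convert hne using 3
    omega

variable {u v : Fin n → A} {j : ℕ}

theorem mem_Ico_of_occursAt_update (hu : Free f u) {p : Fin n} {x : A}
    (h : occursAt f (Function.update u p x) j) : (p : ℕ) ∈ Set.Ico j (j + l) := by
  by_contra hp
  refine hu j (h.congr fun q hq => Function.update_of_ne ?_ x u)
  rintro rfl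
  exact hp hq

theorem exists_ne_mem_Ico_of_occursAt_update (hv : Free f v) {p : Fin n}
    (h : occursAt f (Function.update u p (v p)) j) :
    ∃ q, u q ≠ v q ∧ q ≠ p ∧ (q : ℕ) ∈ Set.Ico j (j + l) := by
  by_contra! hq
  refine hv j (h.congr fun q hqW => ?_)
  by_cases hqp : q = p
  · subst hqp; exact Function.update_self ..
  · rw [Function.update_of_ne hqp]; exact not_not.1 fun hne => hq q hne hqp hqW

variable [DecidableEq A]

theorem notMem_Ico_of_occursAt_update (hf : ¬ hasKErrorBorder f 2) (hu : Free f u)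
    {a b : Fin n} {ja jb : ℕ}
    (hab : a ≠ b) (ha : u a ≠ v a) (hb : u b ≠ v b)
    (hJa : occursAt f (Function.update u a (v a)) ja)
    (hJb : occursAt f (Function.update u b (v b)) jb)
    (hbW : (b : ℕ) ∈ Set.Ico ja (ja + l)) : (a : ℕ) ∉ Set.Ico jb (jb + l) := by
  intro haW
  wlog hle : jb ≤ ja generalizing a b ja jb
  · exact this hab.symm hb ha hJb hJa haW hbW (by omega)
  have haWa := mem_Ico_of_occursAt_update hu hJa
  have hbWb := mem_Ico_of_occursAt_update hu hJb
  rcases hle.eq_or_lt with rfl | hlt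
  · have hb_eq := (hJa.apply_eq hbW).trans (hJb.apply_eq hbW).symm
    rw [Function.update_of_ne hab.symm, Function.update_self] at hb_eq
    exact hb hb_eq
  · have hfilter : ({q | (q : ℕ) ∈ Set.Ico ja (jb + l) ∧
        Function.update u a (v a) q ≠ Function.update u b (v b) q} : Finset (Fin n)) = {a, b} := by
      have := hJa.1; have := hJb.1
      simp only [Set.mem_Ico] at hbW haW haWa hbWb
      ext q
      simp only [Finset.mem_filter, Finset.mem_univ, true_and, Finset.mem_insert,
        Finset.mem_singleton, Function.update_apply_ne_update_apply_iff hab ha hb, Set.mem_Ico]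
      constructor
      · exact And.right
      · rintro (rfl | rfl) <;> omega
    have hborder := hasKErrorBorder_of_occursAt hJa hJb hlt (by simp only [Set.mem_Ico] at *; omega)
    rw [hfilter, Finset.card_pair hab] at hborder
    exact hf hborder

theorem exists_ne_free_update (hf : ¬ hasKErrorBorder f 2) (hu : Free f u) (hv : Free f v)
    (hne : u ≠ v) : ∃ p, u p ≠ v p ∧ Free f (Function.update u p (v p)) := by
  by_contra! hblocked
  have hocc : ∀ p, ∃ j, u p ≠ v p → occursAt f (Function.update u p (v p)) j := by
    intro p
    by_cases hp : u p ≠ v p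
    · obtain ⟨j, hj⟩ := not_forall_not.1 (hblocked p hp)
      exact ⟨j, fun _ => hj⟩
    · exact ⟨0, fun h => absurd h hp⟩
  choose J hJ using hocc
  have hempty := Finset.eq_empty_of_windows_s4 {p | u p ≠ v p} J
    (fun a ha => mem_Ico_of_occursAt_update hu (hJ a (by simpa using ha)))
    (fun a ha => by
      obtain ⟨b, hb, hba, hbW⟩ := exists_ne_mem_Ico_of_occursAt_update hv (hJ a (by simpa using ha))
      exact ⟨b, by simpa using hb, hba, hbW⟩)
    (fun a ha b hb hab => by
      simp only [Finset.mem_filter, Finset.mem_univ, true_and] at ha hb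
      exact notMem_Ico_of_occursAt_update hf hu hab ha hb (hJ a ha) (hJ b hb))
  obtain ⟨p, hp⟩ := Function.ne_iff.1 hne
  simpa [hp] using Finset.ext_iff.1 hempty p

end Occurrences

section Transforms

variable {A : Type*} [DecidableEq A] {l n : ℕ} {f : Fin l → A} {u v : Fin n → A}

theorem FreeTransform.of_chain {k : ℕ} (hk : hammingDist u v = k) (w : Fin (k + 1) → Fin n → A)
    (hw₀ : w 0 = u) (hw_last : w (Fin.last k) = v) (hw_free : ∀ j, Free f (w j))
    (hw_step : ∀ j : Fin k,
      ∃ p : Fin n, w j.castSucc p ≠ v p ∧ w j.succ = Function.update (w j.castSucc) p (v p)) :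
    FreeTransform f u v := by
  subst hk
  exact ⟨w, hw₀, hw_last, hw_free, hw_step⟩

theorem FreeTransform.refl (hu : Free f u) : FreeTransform f u u :=
  .of_chain (hammingDist_self u) (fun _ => u) rfl rfl (fun _ => hu) (fun j => j.elim0)

theorem FreeTransform.cons (hu : Free f u) {p : Fin n} (hp : u p ≠ v p)
    (h : FreeTransform f (Function.update u p (v p)) v) : FreeTransform f u v := by
  obtain ⟨w, hw₀, hw_last, hw_free, hw_step⟩ := h
  refine .of_chain (hammingDist_update_add_one hp).symm (Fin.cons u w) (Fin.cons_zero ..) ?_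
    (Fin.cases hu hw_free) (Fin.cases ?_ ?_)
  · rw [← Fin.succ_last, Fin.cons_succ, hw_last]
  · exact ⟨p, hp, by rw [Fin.castSucc_zero, Fin.cons_zero, Fin.cons_succ, hw₀]⟩
  · intro j
    simpa only [← Fin.succ_castSucc, Fin.cons_succ] using hw_step j

theorem freeTransform_of_not_hasKErrorBorder_two (hf : ¬ hasKErrorBorder f 2) (hu : Free f u)
    (hv : Free f v) : FreeTransform f u v := by
  induction hd : hammingDist u v generalizing u with
  | zero =>
    obtain rfl := hammingDist_eq_zero.1 hd
    exact FreeTransform.refl hu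
  | succ d ih =>
    have hne : u ≠ v := by rintro rfl; simp at hd
    obtain ⟨p, hp, hfree⟩ := exists_ne_free_update hf hu hv hne
    have hd' := hammingDist_update_add_one hp
    exact FreeTransform.cons hu hp (ih hfree (by omega))

end Transforms

theorem stmt4 {A : Type*} [DecidableEq A] {l : ℕ} (f : Fin l → A)
    (hf : ¬ hasKErrorBorder f 2) : HammingIsometric f :=
  fun _ _ _ hu hv => freeTransform_of_not_hasKErrorBorder_two hf hu hv
end

section
/- The word 0301 over Z_4 is not Lee-isometric: there exists n and two vertices u, v of Q_n^4(0301) such that the distance between u and v in Q_n^4(0301) is strictly greater than their distance in Q_n^4. (Witness: n = 6, u = 030001, v = 030201.) -/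
open Finset

/-! The words `030001` and `030201` differ only in their fourth letter, by `2`, so their distance
in `Q_6^4` is `2`. Every common neighbour changes that letter by `±1`, giving `030101` or
`030301`, and both contain `0301`. In the subgraph of `0301`-free words they are therefore at
distance more than `2`, although still connected, by the detour `030001 – 031001 – 031101 –
031201 – 030201` through the third letter. -/

instance {A : Type*} [DecidableEq A] {l n : ℕ} (f : Fin l → A) (u : Fin n → A) (j : ℕ) :
    Decidable (occursAt f u j) :=
  inferInstanceAs (Decidable (∃ _ : j + l ≤ n, _))

theorem free_iff_forall_lt {A : Type*} {l n : ℕ} {f : Fin l → A} {u : Fin n → A} :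
    Free f u ↔ ∀ j < n + 1, ¬ occursAt f u j :=
  ⟨fun h j _ => h j, fun h j hj => h j (by obtain ⟨hle, -⟩ := hj; omega) hj⟩

instance {A : Type*} [DecidableEq A] {l n : ℕ} (f : Fin l → A) (u : Fin n → A) :
    Decidable (Free f u) :=
  decidable_of_iff _ free_iff_forall_lt.symm

instance (n d : ℕ) : DecidableRel (QGraph n d).Adj := fun u v =>
  inferInstanceAs (Decidable (∃ i, u i ≠ v i ∧ (v i = u i + 1 ∨ v i = u i - 1) ∧
    ∀ j, j ≠ i → u j = v j))

theorem QGraph.eq_update_of_mem_commonNeighbors {n d : ℕ} {u v a : Fin n → ZMod d} {i : Fin n}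
    (hi : u i ≠ v i) (heq : ∀ j ≠ i, u j = v j) (ha : a ∈ (QGraph n d).commonNeighbors u v) :
    a = Function.update u i (u i + 1) ∨ a = Function.update u i (u i - 1) := by
  obtain ⟨⟨p, hp, hstep, hu⟩, ⟨q, -, -, hv⟩⟩ := (SimpleGraph.mem_commonNeighbors _).1 ha
  have hpi : p = i := by
    by_contra hpi
    have hqi : q = i := by
      by_contra hqi
      exact hi ((hu i (Ne.symm hpi)).trans (hv i (Ne.symm hqi)).symm)
    exact hp ((heq p hpi).trans (hv p (hqi ▸ hpi)))
  subst hpi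
  have ha : a = Function.update u p (a p) := by
    ext j
    rcases eq_or_ne j p with rfl | hj
    · simp
    · simp [hj, hu j hj]
  rcases hstep with h | h
  · exact .inl (h ▸ ha)
  · exact .inr (h ▸ ha)

theorem SimpleGraph.Reachable.two_lt_dist {V : Type*} {G : SimpleGraph V} {u v : V}
    (hr : G.Reachable u v) (hne : u ≠ v) (hadj : ¬ G.Adj u v)
    (hcommon : G.commonNeighbors u v = ∅) : 2 < G.dist u v := by
  have h := SimpleGraph.two_lt_edist_iff.2 ⟨hne, hadj, hcommon⟩
  rw [← hr.coe_dist_eq_edist] at h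
  exact_mod_cast h

theorem SimpleGraph.two_lt_induce_dist {V : Type*} {G : SimpleGraph V} {s : Set V} {u v : V}
    {hu : u ∈ s} {hv : v ∈ s} (hr : (G.induce s).Reachable ⟨u, hu⟩ ⟨v, hv⟩) (hne : u ≠ v)
    (hadj : ¬ G.Adj u v) (hcommon : ∀ w ∈ G.commonNeighbors u v, w ∉ s) :
    2 < (G.induce s).dist ⟨u, hu⟩ ⟨v, hv⟩ := by
  refine hr.two_lt_dist (fun h => hne (congrArg Subtype.val h)) hadj ?_
  exact Set.eq_empty_iff_forall_notMem.2 fun w hw => hcommon w hw w.2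

theorem not_leeIsometric_of_dist_lt {l d n : ℕ} {f : Fin l → ZMod d} {u v : Fin n → ZMod d}
    (hu : Free f u) (hv : Free f v)
    (h : (QGraph n d).dist u v < ((QGraph n d).induce {w | Free f w}).dist ⟨u, hu⟩ ⟨v, hv⟩) :
    ¬ LeeIsometric f :=
  fun hf => h.ne (hf n u v hu hv).symm

theorem stmt13 :
    ¬ LeeIsometric (![0,3,0,1] : Fin 4 → ZMod 4) ∧
    ∃ (hu : Free (![0,3,0,1] : Fin 4 → ZMod 4) (![0,3,0,0,0,1] : Fin 6 → ZMod 4))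
      (hv : Free (![0,3,0,1] : Fin 4 → ZMod 4) (![0,3,0,2,0,1] : Fin 6 → ZMod 4)),
      (QGraph 6 4).dist ![0,3,0,0,0,1] ![0,3,0,2,0,1] <
        ((QGraph 6 4).induce {w | Free (![0,3,0,1] : Fin 4 → ZMod 4) w}).dist
          ⟨![0,3,0,0,0,1], hu⟩ ⟨![0,3,0,2,0,1], hv⟩ := by
  have hu : Free (![0,3,0,1] : Fin 4 → ZMod 4) (![0,3,0,0,0,1] : Fin 6 → ZMod 4) := by decide
  have hv : Free (![0,3,0,1] : Fin 4 → ZMod 4) (![0,3,0,2,0,1] : Fin 6 → ZMod 4) := by decide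
  have hQ : (QGraph 6 4).dist ![0,3,0,0,0,1] ![0,3,0,2,0,1] ≤ 2 := by
    have h₁ : (QGraph 6 4).Adj ![0,3,0,0,0,1] ![0,3,0,1,0,1] := by decide
    have h₂ : (QGraph 6 4).Adj ![0,3,0,1,0,1] ![0,3,0,2,0,1] := by decide
    exact SimpleGraph.dist_le (.cons h₁ (.cons h₂ .nil))
  set H := (QGraph 6 4).induce {w | Free (![0,3,0,1] : Fin 4 → ZMod 4) w}
  have step : ∀ {a b} (ha : Free (![0,3,0,1] : Fin 4 → ZMod 4) a)
      (hb : Free (![0,3,0,1] : Fin 4 → ZMod 4) b), (QGraph 6 4).Adj a b →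
      H.Reachable ⟨a, ha⟩ ⟨b, hb⟩ :=
    fun _ _ h => (SimpleGraph.induce_adj.2 h).reachable
  have hreach : H.Reachable ⟨![0,3,0,0,0,1], hu⟩ ⟨![0,3,0,2,0,1], hv⟩ :=
    (step hu (b := ![0,3,1,0,0,1]) (by decide) (by decide)).trans <|
      (step _ (b := ![0,3,1,1,0,1]) (by decide) (by decide)).trans <|
      (step _ (b := ![0,3,1,2,0,1]) (by decide) (by decide)).trans (step _ hv (by decide))
  have hfar : 2 < H.dist ⟨![0,3,0,0,0,1], hu⟩ ⟨![0,3,0,2,0,1], hv⟩ := by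
    refine SimpleGraph.two_lt_induce_dist hreach (by decide) (by decide) fun a ha => ?_
    rcases QGraph.eq_update_of_mem_commonNeighbors (i := 3) (by decide) (by decide) ha
      with rfl | rfl <;> decide
  have h := hQ.trans_lt hfar
  exact ⟨not_leeIsometric_of_dist_lt hu hv h, hu, hv, h⟩
end
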